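/- Let I : ℤ × ℤ → ℝ be a symmetric function (I_{mn} = I_{nm}) and consider the bilinear bracket on the free real vector space with basis {L_m, J_m, P¹_m, P²_m : m ∈ ℤ} ∪ {Θ} defined by [L_m,L_n] = (m−n)L_{m+n}, [L_m,P^i_n] = (m−n)P^i_{m+n}, [L_m,J_n] = −n·J_{m+n}, [J_m,P^i_n] = Σ_j ε_{ij} P^j_{m+n}, [J_m,J_n] = 0, [P^i_m,P^j_n] = I_{mn} ε^{ij} Θ, with Θ central. If this bracket satisfies the Jacobi identity, then I_{mn} = 0 for all m,n ∈ ℤ. In other words, the planar Galilean conformal algebra 𝔤₀ admits no exotic central extension making the abelian ideal spanned by the P^i_m non-abelian. -/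
import Mathlib


/-!
STATEMENT 1: If the bracket on the vector space with basis
{L_m, J_m, P¹_m, P²_m : m ∈ ℤ} ∪ {Θ}, defined by the planar Galilean
conformal relations together with [P^i_m, P^j_n] = I_{mn} ε^{ij} Θ (Θ central)
for a symmetric I : ℤ × ℤ → ℝ, satisfies the Jacobi identity, then I ≡ 0:
the planar GCA admits no exotic central extension.
-/

/-- Basis of the would-be exotic central extension of 𝔤₀: `L m`, `J m`,
`P i m` (i ∈ {1,2} represented by `Fin 2`, m ∈ ℤ) and the central element `Th` (Θ). -/
inductive GBasisE : Type
  | L : ℤ → GBasisE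
  | J : ℤ → GBasisE
  | P : Fin 2 → ℤ → GBasisE
  | Th : GBasisE
  deriving DecidableEq

noncomputable section

/-- The antisymmetric symbol: ε_{12} = −ε_{21} = 1, ε_{11} = ε_{22} = 0
(indices 1,2 are represented by 0,1 : Fin 2). -/
def eps (i j : Fin 2) : ℝ :=
  if i = j then 0 else if i = (0 : Fin 2) then 1 else -1

/-- The underlying vector space: the free real vector space on `GBasisE`. -/
abbrev GCAE : Type := GBasisE →₀ ℝ

/-- The bracket on basis elements, with the exotic term
`[P^i_m, P^j_n] = I m n • ε_{ij} • Θ` and `Θ` central. -/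
def bracketB (I : ℤ → ℤ → ℝ) : GBasisE → GBasisE → GCAE
  | .L m, .L n => ((m : ℝ) - n) • Finsupp.single (.L (m + n)) 1
  | .L m, .P i n => ((m : ℝ) - n) • Finsupp.single (.P i (m + n)) 1
  | .P i n, .L m => -(((m : ℝ) - n) • Finsupp.single (.P i (m + n)) 1)
  | .L m, .J n => (-(n : ℝ)) • Finsupp.single (.J (m + n)) 1
  | .J n, .L m => ((n : ℝ)) • Finsupp.single (.J (m + n)) 1
  | .J m, .P i n => ∑ j : Fin 2, eps i j • Finsupp.single (.P j (m + n)) 1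
  | .P i n, .J m => -(∑ j : Fin 2, eps i j • Finsupp.single (.P j (m + n)) 1)
  | .P i m, .P j n => (I m n * eps i j) • Finsupp.single .Th 1
  | _, _ => 0

/-- The bracket, extended bilinearly from the basis. -/
def bracket (I : ℤ → ℤ → ℝ) (x y : GCAE) : GCAE :=
  x.sum fun bx cx => y.sum fun bz cz => (cx * cz) • bracketB I bx bz

lemma bracket_single (I : ℤ → ℤ → ℝ) (a b : GBasisE) (c d : ℝ) :
    bracket I (Finsupp.single a c) (Finsupp.single b d) = (c * d) • bracketB I a b := by
  unfold bracket
  rw [Finsupp.sum_single_index (by simp), Finsupp.sum_single_index (by simp)]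

lemma key (I : ℤ → ℤ → ℝ)
    (hJacobi : ∀ x y z : GCAE,
      bracket I x (bracket I y z) + bracket I y (bracket I z x) +
        bracket I z (bracket I x y) = 0) (k m n : ℤ) :
    ((k : ℝ) - n) * I m (k + n) + ((k : ℝ) - m) * I n (k + m) = 0 := by
  have h := hJacobi (Finsupp.single (.L k) 1) (Finsupp.single (.P 0 m) 1)
    (Finsupp.single (.P 1 n) 1)
  have e1 : bracket I (Finsupp.single (GBasisE.P 0 m) 1) (Finsupp.single (GBasisE.P 1 n) 1)
      = Finsupp.single .Th (I m n) := by
    rw [bracket_single]; simp [bracketB, eps, Finsupp.smul_single]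
  have e2 : bracket I (Finsupp.single (GBasisE.P 1 n) 1) (Finsupp.single (GBasisE.L k) 1)
      = Finsupp.single (GBasisE.P 1 (k + n)) (-(((k:ℝ) - n))) := by
    rw [bracket_single]; simp [bracketB, Finsupp.smul_single]
  have e3 : bracket I (Finsupp.single (GBasisE.L k) 1) (Finsupp.single (GBasisE.P 0 m) 1)
      = Finsupp.single (GBasisE.P 0 (k + m)) ((k:ℝ) - m) := by
    rw [bracket_single]; simp [bracketB, Finsupp.smul_single]
  rw [e1, e2, e3, bracket_single, bracket_single, bracket_single] at h
  have := congrArg (fun f : GCAE => f .Th) h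
  simp [bracketB, eps, Finsupp.smul_single] at this
  linarith

/-- No exotic central extension: if `I` is symmetric and the bracket with exotic
term `[P^i_m, P^j_n] = I_{mn} ε^{ij} Θ` satisfies the Jacobi identity, then `I ≡ 0`. -/
theorem no_exotic_central_extension (I : ℤ → ℤ → ℝ)
    (hsym : ∀ m n : ℤ, I m n = I n m)
    (hJacobi : ∀ x y z : GCAE,
      bracket I x (bracket I y z) + bracket I y (bracket I z x) +
        bracket I z (bracket I x y) = 0) :
    ∀ m n : ℤ, I m n = 0 := by
  have hoff : ∀ m s : ℤ, s ≠ 2 * m → I m s = 0 := by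
    intro m s hs
    have h := key I hJacobi (s - m) m m
    have h2 : ((s : ℝ) - m - m) ≠ 0 := by
      intro h0
      apply hs
      have : (s : ℝ) = 2 * m := by linarith
      exact_mod_cast this
    have : (2 : ℝ) * (((s:ℝ) - m) - m) * I m s = 0 := by
      have hsm : s - m + m = s := by ring
      rw [hsm] at h
      push_cast at h
      linarith
    rcases mul_eq_zero.mp this with h' | h'
    · rcases mul_eq_zero.mp h' with h'' | h''
      · exact absurd h'' two_ne_zero
      · exact absurd h'' h2
    · exact h'
  intro m n
  by_cases hn : n = 2 * m
  · subst hn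
    by_cases hm : m = 0
    · subst hm
      have h := key I hJacobi 1 0 (-1)
      have hio : I (-1) 1 = 0 := hoff (-1) 1 (by norm_num)
      norm_num at h
      have : (2:ℤ) * 0 = 0 := by norm_num
      rw [this]
      linarith [hio, h]
    · rw [hsym]
      exact hoff (2*m) m (by omega)
  · exact hoff m n hn

end
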